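/- arXiv:2203.02693 — 9 statements merged into one kernel-verified Lean document; each statement's English description precedes it below -/
import Mathlib

section
/- Let n ≥ 1 and let J ⊆ {0,1,…,n} be a finite set with 0 ∈ J, n ∈ J and mei(J) < n. Set ε := mei(J)/(n − mei(J)). Then the associated point set S_J is an ε-approximation of the continuous Pareto front {(x, n−x) : x ∈ [0, n]} (and hence also of the discrete front {(i, n−i) : i ∈ {0,…,n}}); that is, for every real ρ ∈ [0, n] there exists j ∈ J with (1+ε)·j ≥ ρ and (1+ε)·(n−j) ≥ n−ρ. -/
/-!
Write `m = mei J`, so that `1 + ε = n / (n - m)`. For `ρ ∈ [0, n]` put `x = ρ (n - m) / n ∈ [0, n - m]`.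
Since consecutive elements of `J` are at most `m` apart and `0, n ∈ J`, some `j ∈ J` lies in `[x, x + m]`,
and scaling `x ≤ j` and `n - j ≥ (n - m) - x` by `1 + ε` gives the two domination inequalities.
-/

/-- For `a ∈ J`, the distance from `a` to the next larger element of `J`
(`0` if `a` is the maximum of `J`). -/
def gapAfter (J : Finset ℕ) (a : ℕ) : ℕ :=
  ((J.filter (fun b => a < b)).min.untopD a) - a

/-- The maximal empty interval size of `J`: listing the elements of `J` in increasing
order as `j_1 < j_2 < … < j_m`, this is `max_{1 ≤ a ≤ m-1} (j_{a+1} - j_a)`. -/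
def mei (J : Finset ℕ) : ℕ := J.sup (fun a => gapAfter J a)

lemma exists_mem_gt_le_add_mei {J : Finset ℕ} {a b : ℕ} (ha : a ∈ J) (hb : b ∈ J) (hab : a < b) :
    ∃ c ∈ J, a < c ∧ c ≤ a + mei J := by
  obtain ⟨c, hc⟩ := Finset.min_of_nonempty ⟨b, Finset.mem_filter.2 ⟨hb, hab⟩⟩
  obtain ⟨hcJ, hac⟩ := Finset.mem_filter.1 (Finset.mem_of_min hc)
  have hgap : gapAfter J a = c - a := by rw [gapAfter, hc]; rfl
  have hle : gapAfter J a ≤ mei J := Finset.le_sup ha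
  exact ⟨c, hcJ, hac, by omega⟩

lemma exists_mem_Icc_add_mei {J : Finset ℕ} {a b : ℕ} (ha : a ∈ J) (hb : b ∈ J) {x : ℝ}
    (hax : (a : ℝ) ≤ x) (hxb : x ≤ b) : ∃ j ∈ J, x ≤ j ∧ (j : ℝ) ≤ x + mei J := by
  set T := J.filter (fun j : ℕ => (j : ℝ) ≤ x + mei J)
  have hT : T.Nonempty :=
    ⟨a, Finset.mem_filter.2 ⟨ha, by linarith [(mei J).cast_nonneg (α := ℝ)]⟩⟩
  obtain ⟨hjJ, hjx⟩ := Finset.mem_filter.1 (T.max'_mem hT)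
  refine ⟨T.max' hT, hjJ, ?_, hjx⟩
  by_contra! hlt
  -- the successor of `max' T` in `J` would still lie in `T`
  have hjb : T.max' hT < b := by exact_mod_cast hlt.trans_le hxb
  obtain ⟨c, hcJ, hjc, hcj⟩ := exists_mem_gt_le_add_mei hjJ hb hjb
  have hcT : c ∈ T := Finset.mem_filter.2 ⟨hcJ, by
    have : (c : ℝ) ≤ T.max' hT + mei J := by exact_mod_cast hcj
    linarith⟩
  exact absurd (T.le_max' c hcT) (not_le.2 hjc)

theorem stmt2_general (n : ℕ) (J : Finset ℕ)
    (h0 : 0 ∈ J) (hnJ : n ∈ J) (hmei : mei J < n)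
    (ε : ℝ) (hε : ε = (mei J : ℝ) / ((n : ℝ) - (mei J : ℝ))) :
    ∀ ρ : ℝ, 0 ≤ ρ → ρ ≤ n →
      ∃ j ∈ J, (1 + ε) * (j : ℝ) ≥ ρ ∧ (1 + ε) * ((n : ℝ) - (j : ℝ)) ≥ (n : ℝ) - ρ := by
  intro ρ hρ0 hρn
  have hmn : (mei J : ℝ) < n := by exact_mod_cast hmei
  set m : ℝ := (mei J : ℝ)
  have hm0 : 0 ≤ m := Nat.cast_nonneg _
  have hgap : 0 < (n : ℝ) - m := sub_pos.2 hmn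
  have hscale : (1 + ε) * (n - m) = n := by
    rw [hε]; field_simp; ring
  have hε0 : 0 ≤ 1 + ε := by rw [hε]; positivity
  set x := ρ * (n - m) / n
  have hx0 : 0 ≤ x := by positivity
  have hxρ : (1 + ε) * x = ρ := by
    rw [mul_div_assoc', mul_left_comm, hscale, mul_div_cancel_right₀ _ (by linarith)]
  have hxn : x ≤ n - m := by
    rw [div_le_iff₀ (by linarith)]; nlinarith
  obtain ⟨j, hjJ, hxj, hjx⟩ :=
    exists_mem_Icc_add_mei h0 hnJ (by simpa using hx0) (by linarith : x ≤ n)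
  refine ⟨j, hjJ, ?_, ?_⟩
  · calc ρ = (1 + ε) * x := hxρ.symm
      _ ≤ (1 + ε) * j := by gcongr
  · calc (n : ℝ) - ρ = (1 + ε) * ((n - m) - x) := by rw [mul_sub, hscale, hxρ]
      _ ≤ (1 + ε) * (n - j) := mul_le_mul_of_nonneg_left (by linarith) hε0

/-- Lemma 2: if `J ⊆ {0,…,n}` contains `0` and `n` and `ε = mei(J)/(n - mei(J))`,
then the point set `S_J = {(j, n-j) : j ∈ J}` is an `ε`-approximation of the
continuous Pareto front `{(ρ, n-ρ) : ρ ∈ [0,n]}` of OneMinMax. -/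
theorem stmt2 (n : ℕ) (hn : 1 ≤ n) (J : Finset ℕ)
    (hJ : ∀ j ∈ J, j ≤ n) (h0 : 0 ∈ J) (hnJ : n ∈ J) (hmei : mei J < n)
    (ε : ℝ) (hε : ε = (mei J : ℝ) / ((n : ℝ) - (mei J : ℝ))) :
    ∀ ρ : ℝ, 0 ≤ ρ → ρ ≤ n →
      ∃ j ∈ J, (1 + ε) * (j : ℝ) ≥ ρ ∧ (1 + ε) * ((n : ℝ) - (j : ℝ)) ≥ (n : ℝ) - ρ :=
  stmt2_general n J h0 hnJ hmei ε hε
end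

section
/- Let n ≥ 2 and N ≥ 3 be natural numbers, and set g := ⌈n/(N−1)⌉. Then g < n, and there exists a finite set J ⊆ {0,1,…,n} with 0 ∈ J, n ∈ J and |J| ≤ N such that the associated point set S_J is an ε-approximation of the continuous Pareto front {(x, n−x) : x ∈ [0, n]} for ε = g/(n−g). (Corollary 1: ε_opt(N) ≤ mei_opt(N)/(n − mei_opt(N)).) -/
/-!
Since `1 + ε = n / (n - g)`, the point `(j, n - j)` `ε`-dominates `(ρ, n - ρ)` as soon as `j` lies
in the window `[c, c + g]` with `c = ρ (n - g) / n`; for `ρ ∈ [0, n]` this window has length `g`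
and lies inside `[0, n]`. Every such window contains a multiple of `g`, and as `n ≤ (N - 1) g`,
the `N` points `min (i g) n`, `i < N`, include `0`, `n` and every multiple of `g` up to `n`.
-/

open Finset

section OrderedField

variable {K : Type*} [Field K] [LinearOrder K] [IsStrictOrderedRing K]

theorem exists_nat_mul_mem_Icc [FloorSemiring K] {g c : K} (hg : 0 < g) (hc : 0 ≤ c) :
    ∃ i : ℕ, (i : K) * g ∈ Set.Icc c (c + g) := by
  refine ⟨⌈c / g⌉₊, ?_, ?_⟩
  · rw [← div_le_iff₀ hg]
    exact Nat.le_ceil _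
  · have := Nat.ceil_lt_add_one (div_nonneg hc hg.le)
    rw [← le_div_iff₀ hg, add_div, div_self hg.ne']
    exact this.le

theorem dominates_of_mem_Icc {n g ρ j : K} (hn : 0 < n) (hgn : g < n)
    (hj : j ∈ Set.Icc (ρ * (n - g) / n) (ρ * (n - g) / n + g)) :
    (1 + g / (n - g)) * j ≥ ρ ∧ (1 + g / (n - g)) * (n - j) ≥ n - ρ := by
  have hng : 0 < n - g := sub_pos.mpr hgn
  have he : 1 + g / (n - g) = n / (n - g) := by field_simp; ring
  obtain ⟨hlo, hhi⟩ := hj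
  rw [div_le_iff₀ hn] at hlo
  rw [div_add' _ _ _ hn.ne', le_div_iff₀ hn] at hhi
  rw [he, div_mul_eq_mul_div, div_mul_eq_mul_div, ge_iff_le, ge_iff_le, le_div_iff₀ hng,
    le_div_iff₀ hng]
  constructor <;> nlinarith

end OrderedField

theorem le_pred_mul_and_pred_mul_lt_of_eq_ceil {n N g : ℕ} (hN : 1 < N)
    (hg : (g : ℤ) = ⌈(n : ℚ) / ((N : ℚ) - 1)⌉) : n ≤ (N - 1) * g ∧ (N - 1) * g < n + (N - 1) := by
  have hM : ((N - 1 : ℕ) : ℚ) = N - 1 := by rw [Nat.cast_sub hN.le, Nat.cast_one]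
  have hM_pos : (0 : ℚ) < (N - 1 : ℕ) := by exact_mod_cast Nat.sub_pos_of_lt hN
  obtain ⟨hlo, hhi⟩ := Int.ceil_eq_iff.mp hg.symm
  rw [← hM, Int.cast_natCast] at hlo hhi
  rw [div_le_iff₀ hM_pos] at hhi
  rw [lt_div_iff₀ hM_pos] at hlo
  constructor
  · exact_mod_cast (show (n : ℚ) ≤ (N - 1 : ℕ) * g by linarith)
  · exact_mod_cast (show ((N - 1 : ℕ) : ℚ) * g < n + (N - 1 : ℕ) by linarith)

/-- Corollary 1: for `n ≥ 2`, `N ≥ 3` and `g = ⌈n/(N-1)⌉` one has `g < n`, and there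
is a set `J ⊆ {0,…,n}` with `0, n ∈ J` and `|J| ≤ N` whose associated point set
`S_J = {(j, n-j) : j ∈ J}` is an `ε`-approximation of the continuous Pareto front
`{(ρ, n-ρ) : ρ ∈ [0,n]}` for `ε = g/(n-g)`. -/
theorem stmt3 (n N : ℕ) (hn : 2 ≤ n) (hN : 3 ≤ N) (g : ℕ)
    (hg : (g : ℤ) = ⌈(n : ℚ) / ((N : ℚ) - 1)⌉) :
    g < n ∧
    ∃ J : Finset ℕ, (∀ j ∈ J, j ≤ n) ∧ 0 ∈ J ∧ n ∈ J ∧ J.card ≤ N ∧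
      ∀ ρ : ℝ, 0 ≤ ρ → ρ ≤ n →
        ∃ j ∈ J, (1 + (g : ℝ) / ((n : ℝ) - (g : ℝ))) * (j : ℝ) ≥ ρ ∧
          (1 + (g : ℝ) / ((n : ℝ) - (g : ℝ))) * ((n : ℝ) - (j : ℝ)) ≥ (n : ℝ) - ρ := by
  obtain ⟨hn_le, hlt⟩ := le_pred_mul_and_pred_mul_lt_of_eq_ceil (by omega : 1 < N) hg
  have hg_pos : 0 < g := Nat.pos_of_ne_zero (by rintro rfl; omega)
  have hgn : g < n := by
    by_contra! hng
    obtain ⟨M, rfl⟩ : ∃ M, N = M + 2 := ⟨N - 2, by omega⟩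
    rw [show M + 2 - 1 = M + 1 by omega] at hlt
    nlinarith [Nat.mul_le_mul_left (M + 1) hng]
  refine ⟨hgn, (range N).image (fun i => min (i * g) n), by simp, ?_, ?_, ?_, ?_⟩
  · exact mem_image.mpr ⟨0, mem_range.mpr (by omega), by simp⟩
  · exact mem_image.mpr ⟨N - 1, mem_range.mpr (by omega), min_eq_right hn_le⟩
  · exact card_image_le.trans (card_range N).le
  intro ρ hρ0 hρn
  have hnR : (0 : ℝ) < n := by exact_mod_cast (by omega : 0 < n)
  have hgnR : (g : ℝ) < n := by exact_mod_cast hgn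
  have hc_le : ρ * (n - g) / n ≤ n - g := by
    rw [div_le_iff₀ hnR]; nlinarith
  obtain ⟨i, hi⟩ := exists_nat_mul_mem_Icc (by exact_mod_cast hg_pos : (0 : ℝ) < g)
    (div_nonneg (mul_nonneg hρ0 (sub_nonneg.mpr hgnR.le)) hnR.le)
  have hin : i * g ≤ n := by exact_mod_cast (show (i : ℝ) * g ≤ n by linarith [hi.2])
  have hiN : i < N := by
    have := Nat.le_of_mul_le_mul_right (hin.trans hn_le) hg_pos
    omega
  refine ⟨i * g, mem_image.mpr ⟨i, mem_range.mpr hiN, min_eq_left hin⟩, ?_⟩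
  push_cast
  exact dominates_of_mem_Icc hnR hgnR hi
end

section
/- Let n ≥ 1, let ε ≥ 0 be a real number, and let J ⊆ {0,1,…,n} be a finite set with 0 ∈ J and n ∈ J such that the associated point set S_J is an ε-approximation of the discrete Pareto front {(i, n−i) : i ∈ {0,…,n}}, i.e., for every i ∈ {0,…,n} there exists j ∈ J with (1+ε)·j ≥ i and (1+ε)·(n−j) ≥ n−i. Then ε·(n − mei(J)) ≥ mei(J) − 1. (Lemma 3: ε ≥ (mei(S)−1)/(n − mei(S)).) -/
lemma add_gapAfter_mem_and_le {J : Finset ℕ} {a : ℕ} (h : 0 < gapAfter J a) :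
    a + gapAfter J a ∈ J ∧ ∀ j ∈ J, a < j → a + gapAfter J a ≤ j := by
  unfold gapAfter at *
  by_cases hF : (J.filter (fun b => a < b)).Nonempty
  · rw [← Finset.coe_min' hF, WithTop.untopD_coe] at *
    have hmem := Finset.mem_filter.mp (Finset.min'_mem _ hF)
    refine ⟨by rw [Nat.add_sub_cancel' hmem.2.le]; exact hmem.1, fun j hj haj => ?_⟩
    have := (J.filter (fun b => a < b)).min'_le j (Finset.mem_filter.mpr ⟨hj, haj⟩)
    omega
  · rw [Finset.not_nonempty_iff_eq_empty.mp hF, Finset.min_empty, WithTop.untopD_top] at h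
    omega

lemma exists_gap_eq_mei {J : Finset ℕ} (h : 0 < mei J) :
    ∃ a ∈ J, a + mei J ∈ J ∧ ∀ j ∈ J, a < j → a + mei J ≤ j := by
  have hJ : J.Nonempty := by
    rw [Finset.nonempty_iff_ne_empty]
    rintro rfl
    simp [mei] at h
  obtain ⟨a, ha, hmax⟩ := Finset.exists_mem_eq_sup J hJ (gapAfter J)
  rw [mei, hmax] at h ⊢
  exact ⟨a, ha, add_gapAfter_mem_and_le h⟩

lemma exists_nat_mem_Ioo {x y : ℝ} (hx : 0 ≤ x) (hxy : x + 1 < y) :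
    ∃ i : ℕ, x < i ∧ (i : ℝ) < y :=
  ⟨⌊x⌋₊ + 1, by exact_mod_cast Nat.lt_floor_add_one x, by
    push_cast
    linarith [Nat.floor_le hx]⟩

lemma sub_one_le_mul_of_gap {J : Finset ℕ} {n a g : ℕ} {ε : ℝ} (hε : 0 ≤ ε)
    (hgap : ∀ j ∈ J, j ≤ a ∨ a + g ≤ j) (hn : a + g ≤ n)
    (happrox : ∀ i : ℕ, i ≤ n →
      ∃ j ∈ J, (1 + ε) * (j : ℝ) ≥ (i : ℝ) ∧
        (1 + ε) * ((n : ℝ) - (j : ℝ)) ≥ (n : ℝ) - (i : ℝ)) :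
    (g : ℝ) - 1 ≤ ε * ((n : ℝ) - g) := by
  by_contra! hlt
  have hnR : (a : ℝ) + g ≤ n := by exact_mod_cast hn
  obtain ⟨i, hi_low, hi_high⟩ :=
    exists_nat_mem_Ioo (x := (1 + ε) * a) (y := a + g - ε * (n - (a + g)))
      (by positivity) (by nlinarith)
  have hin : i ≤ n := by
    have : (i : ℝ) ≤ n := by nlinarith
    exact_mod_cast this
  obtain ⟨j, hj, hj_low, hj_high⟩ := happrox i hin
  rcases hgap j hj with hja | hjb
  · have : (j : ℝ) ≤ a := by exact_mod_cast hja
    nlinarith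
  · have : (a : ℝ) + g ≤ j := by exact_mod_cast hjb
    nlinarith

theorem stmt4_general (n : ℕ) (ε : ℝ) (hε : 0 ≤ ε)
    (J : Finset ℕ) (hJ : ∀ j ∈ J, j ≤ n)
    (happrox : ∀ i : ℕ, i ≤ n →
      ∃ j ∈ J, (1 + ε) * (j : ℝ) ≥ (i : ℝ) ∧
        (1 + ε) * ((n : ℝ) - (j : ℝ)) ≥ (n : ℝ) - (i : ℝ)) :
    ε * ((n : ℝ) - (mei J : ℝ)) ≥ (mei J : ℝ) - 1 := by
  rcases Nat.eq_zero_or_pos (mei J) with h0 | hpos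
  · rw [h0, Nat.cast_zero]
    nlinarith [(n.cast_nonneg : (0 : ℝ) ≤ n)]
  obtain ⟨a, -, hb, hnext⟩ := exists_gap_eq_mei hpos
  have hgap : ∀ j ∈ J, j ≤ a ∨ a + mei J ≤ j := fun j hj =>
    (le_or_gt j a).imp_right (hnext j hj)
  exact sub_one_le_mul_of_gap hε hgap (hJ _ hb) happrox

/-- Lemma 3: if `J ⊆ {0,…,n}` contains `0` and `n` and its point set
`S_J = {(j, n-j) : j ∈ J}` is an `ε`-approximation of the discrete Pareto front
`{(i, n-i) : i ∈ {0,…,n}}` of OneMinMax, then `ε ≥ (mei(J) - 1)/(n - mei(J))`,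
stated as `ε·(n - mei(J)) ≥ mei(J) - 1`. -/
theorem stmt4 (n : ℕ) (hn : 1 ≤ n) (ε : ℝ) (hε : 0 ≤ ε)
    (J : Finset ℕ) (hJ : ∀ j ∈ J, j ≤ n) (h0 : 0 ∈ J) (hnJ : n ∈ J)
    (happrox : ∀ i : ℕ, i ≤ n →
      ∃ j ∈ J, (1 + ε) * (j : ℝ) ≥ (i : ℝ) ∧
        (1 + ε) * ((n : ℝ) - (j : ℝ)) ≥ (n : ℝ) - (i : ℝ)) :
    ε * ((n : ℝ) - (mei J : ℝ)) ≥ (mei J : ℝ) - 1 :=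
  stmt4_general n ε hε J hJ happrox
end

section
/- Let n ≥ 1, let r₁, r₂ ≤ 0 be real numbers, and let J ⊆ {0,1,…,n} be a finite set with 0 ∈ J and n ∈ J, with elements listed in increasing order as j_1 < j_2 < … < j_m. Then the two-dimensional Lebesgue measure of the union ⋃_{a=1}^{m} [r₁, j_a] × [r₂, n−j_a] equals A − Σ_{a=2}^{m} (j_a − j_{a−1})²/2, where A := −r₁·n − r₂·n + r₁·r₂ + n²/2. (Exact hypervolume formula for OneMinMax, equation (1) of the paper.) -/
/-!
Add the points of `J` in increasing order. When `a` is added to a set with maximum `m < a`,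
the union of boxes grows exactly by the rectangle `(m, a] × [r₂, n - a]`: the rest of the new
box lies in the box at `m`. Starting from the single box at the least point `l`, these areas sum
to `(l - r₁)(n - l - r₂) + Σ g (n - r₂) - Σ g (j + g)` over consecutive `j < j + g`, and
`Σ g (2j + g) = m² - l²` telescopes; for `l = 0` and `m = n` this is `A - Σ g² / 2`.
-/

open MeasureTheory

/-- The hypervolume of the point set `{(j, n-j) : j ∈ J}` with respect to the
reference point `(r₁, r₂)`: the two-dimensional Lebesgue measure of
`⋃_{j ∈ J} [r₁, j] × [r₂, n-j]`. -/
noncomputable def HV (n : ℕ) (J : Finset ℕ) (r₁ r₂ : ℝ) : ℝ :=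
  (volume (⋃ j ∈ J, Set.Icc r₁ (j : ℝ) ×ˢ Set.Icc r₂ ((n : ℝ) - (j : ℝ)))).toReal

open Set

section gapAfter

variable {J : Finset ℕ} {a b j : ℕ}

lemma gapAfter_eq_zero_of_forall_le (h : ∀ b ∈ J, b ≤ a) : gapAfter J a = 0 := by
  have : J.filter (fun b => a < b) = ∅ :=
    Finset.filter_eq_empty_iff.mpr fun b hb => (h b hb).not_gt
  simp [gapAfter, this]

lemma gapAfter_insert_of_forall_le (h : ∀ b ∈ J, b ≤ j) (hja : j < a) :
    gapAfter (insert a J) j = a - j := by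
  have : (insert a J).filter (fun b => j < b) = {a} := by
    rw [Finset.filter_insert, if_pos hja,
      Finset.filter_eq_empty_iff.mpr fun b hb => (h b hb).not_gt]
    rfl
  simp only [gapAfter, this, Finset.min_singleton, WithTop.untopD_coe]

lemma gapAfter_insert_of_lt_of_le (hb : b ∈ J) (hjb : j < b) (hba : b ≤ a) :
    gapAfter (insert a J) j = gapAfter J j := by
  rw [gapAfter, gapAfter, Finset.filter_insert, if_pos (hjb.trans_le hba), Finset.min_insert,
    min_eq_right]
  exact (Finset.min_le (Finset.mem_filter.mpr ⟨hb, hjb⟩)).trans (WithTop.coe_le_coe.mpr hba)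

lemma sum_gapAfter_sq_insert_of_isGreatest {m : ℕ} (hm : IsGreatest (J : Set ℕ) m)
    (hma : m < a) :
    ∑ j ∈ insert a J, gapAfter (insert a J) j ^ 2 = ∑ j ∈ J, gapAfter J j ^ 2 + (a - m) ^ 2 := by
  have haJ : a ∉ J := fun ha => (hm.2 ha).not_gt hma
  have hle : ∀ b ∈ J, b ≤ m := fun b hb => hm.2 hb
  have hleA : ∀ b ∈ insert a J, b ≤ a := by
    simpa using fun b hb => (hle b hb).trans hma.le
  rw [Finset.sum_insert haJ, gapAfter_eq_zero_of_forall_le hleA,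
    ← Finset.add_sum_erase J _ hm.1, ← Finset.add_sum_erase J _ hm.1,
    gapAfter_insert_of_forall_le hle hma, gapAfter_eq_zero_of_forall_le hle]
  have hrest : ∀ j ∈ J.erase m, gapAfter (insert a J) j = gapAfter J j := fun j hj =>
    gapAfter_insert_of_lt_of_le hm.1
      ((hle j (Finset.mem_of_mem_erase hj)).lt_of_ne (Finset.ne_of_mem_erase hj)) hma.le
  rw [Finset.sum_congr rfl fun j hj => congrArg (· ^ 2) (hrest j hj)]
  ring

end gapAfter

lemma Real.volume_real_prod (s t : Set ℝ) :
    volume.real (s ×ˢ t) = volume.real s * volume.real t := by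
  simp only [measureReal_def, Measure.volume_eq_prod, Measure.prod_prod, ENNReal.toReal_mul]

section HV

variable {n : ℕ} {r₁ r₂ : ℝ} {J : Finset ℕ} {a m : ℕ}

lemma HV_singleton (h₁ : r₁ ≤ a) (h₂ : r₂ ≤ n - a) :
    HV n {a} r₁ r₂ = (a - r₁) * (n - a - r₂) := by
  rw [HV, ← measureReal_def, Finset.set_biUnion_singleton, Real.volume_real_prod,
    Real.volume_real_Icc_of_le h₁, Real.volume_real_Icc_of_le (by linarith)]

lemma biUnion_insert_eq_Ioc_prod_union (hm : IsGreatest (J : Set ℕ) m) (hma : m ≤ a)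
    (h₁ : r₁ ≤ m) :
    ⋃ j ∈ insert a J, Icc r₁ (j : ℝ) ×ˢ Icc r₂ ((n : ℝ) - j) =
      Ioc (m : ℝ) a ×ˢ Icc r₂ ((n : ℝ) - a) ∪ ⋃ j ∈ J, Icc r₁ (j : ℝ) ×ˢ Icc r₂ ((n : ℝ) - j) := by
  have hmaR : (m : ℝ) ≤ a := by exact_mod_cast hma
  have hsub : Icc r₁ (m : ℝ) ×ˢ Icc r₂ ((n : ℝ) - a) ⊆
      ⋃ j ∈ J, Icc r₁ (j : ℝ) ×ˢ Icc r₂ ((n : ℝ) - j) :=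
    (prod_mono le_rfl (Icc_subset_Icc_right (by linarith))).trans
      (subset_biUnion_of_mem (u := fun j : ℕ => Icc r₁ (j : ℝ) ×ˢ Icc r₂ ((n : ℝ) - j)) hm.1)
  rw [Finset.set_biUnion_insert, ← Icc_union_Ioc_eq_Icc h₁ hmaR, union_prod, union_right_comm,
    union_eq_right.mpr hsub, union_comm]

lemma disjoint_Ioc_prod_biUnion (hm : ∀ j ∈ J, j ≤ m) (t : ℕ → Set ℝ) (u : Set ℝ) :
    Disjoint (Ioc (m : ℝ) a ×ˢ u) (⋃ j ∈ J, Icc r₁ (j : ℝ) ×ˢ t j) := by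
  refine disjoint_iUnion₂_right.mpr fun j hj => disjoint_prod.mpr (Or.inl ?_)
  refine disjoint_left.mpr fun x hx hx' => ?_
  have : (j : ℝ) ≤ m := by exact_mod_cast hm j hj
  linarith [hx.1, hx'.2]

lemma HV_insert_of_isGreatest (hm : IsGreatest (J : Set ℕ) m) (hma : m ≤ a) (h₁ : r₁ ≤ m)
    (h₂ : r₂ ≤ n - a) :
    HV n (insert a J) r₁ r₂ = HV n J r₁ r₂ + (a - m) * (n - a - r₂) := by
  have hfin : volume (⋃ j ∈ J, Icc r₁ (j : ℝ) ×ˢ Icc r₂ ((n : ℝ) - j)) ≠ ⊤ :=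
    (J.isCompact_biUnion fun _ _ => isCompact_Icc.prod isCompact_Icc).measure_lt_top.ne
  rw [HV, HV, ← measureReal_def, ← measureReal_def, biUnion_insert_eq_Ioc_prod_union hm hma h₁,
    measureReal_union (disjoint_Ioc_prod_biUnion (fun j hj => hm.2 hj) _ _)
      (J.measurableSet_biUnion fun _ _ => measurableSet_Icc.prod measurableSet_Icc)
      (by rw [Measure.volume_eq_prod, Measure.prod_prod, Real.volume_Ioc, Real.volume_Icc]
          finiteness) hfin,
    Real.volume_real_prod, Real.volume_real_Ioc_of_le (by exact_mod_cast hma),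
    Real.volume_real_Icc_of_le (by linarith), add_comm]

theorem HV_eq_of_isLeast_of_isGreatest {l : ℕ} (hl : IsLeast (J : Set ℕ) l)
    (hm : IsGreatest (J : Set ℕ) m) (h₁ : r₁ ≤ l) (h₂ : r₂ ≤ n - m) :
    HV n J r₁ r₂ = (l - r₁) * (n - l - r₂) + (m - l) * (n - r₂) - ((m : ℝ) ^ 2 - l ^ 2) / 2
      - (∑ j ∈ J, gapAfter J j ^ 2 : ℕ) / 2 := by
  induction J using Finset.induction_on_max generalizing l m with
  | empty => simpa using hl.1
  | insert a s hlt ih =>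
    have hsa : ∀ b ∈ insert a s, b ≤ a := by simpa using fun b hb => (hlt b hb).le
    obtain rfl : m = a := hm.unique ⟨by simp, hsa⟩
    rcases s.eq_empty_or_nonempty with rfl | hs
    · obtain rfl : l = m := by simpa using hl.1
      rw [insert_empty_eq, HV_singleton h₁ h₂, Finset.sum_singleton,
        gapAfter_eq_zero_of_forall_le (by simp)]
      ring
    · have hm' := s.isGreatest_max' hs
      have hm'a := hlt _ hm'.1
      have hl' : IsLeast (s : Set ℕ) l := by
        refine ⟨(Finset.mem_insert.mp hl.1).resolve_left ?_, fun b hb => hl.2 (by simp [hb])⟩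
        rintro rfl
        exact (hl.2 (Finset.mem_insert_of_mem hm'.1)).not_gt hm'a
      have hlm' : (l : ℝ) ≤ s.max' hs := by exact_mod_cast hl'.2 hm'.1
      have hm'aR : (s.max' hs : ℝ) ≤ m := by exact_mod_cast hm'a.le
      rw [HV_insert_of_isGreatest hm' hm'a.le (h₁.trans hlm') h₂,
        ih hl' hm' h₁ (by linarith), sum_gapAfter_sq_insert_of_isGreatest hm' hm'a]
      push_cast [Nat.cast_sub hm'a.le]
      ring

end HV

theorem stmt6_general (n : ℕ) (r₁ r₂ : ℝ) (hr₁ : r₁ ≤ 0) (hr₂ : r₂ ≤ 0)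
    (J : Finset ℕ) (hJ : ∀ j ∈ J, j ≤ n) (h0 : 0 ∈ J) (hnJ : n ∈ J)
    (A : ℝ) (hA : A = -r₁ * n - r₂ * n + r₁ * r₂ + (n : ℝ) ^ 2 / 2) :
    HV n J r₁ r₂ = A - ∑ j ∈ J, (gapAfter J j : ℝ) ^ 2 / 2 := by
  rw [HV_eq_of_isLeast_of_isGreatest (l := 0) ⟨h0, fun j _ => Nat.zero_le j⟩ ⟨hnJ, hJ⟩
    (by simpa using hr₁) (by simpa using hr₂), hA, ← Finset.sum_div]
  push_cast
  ring

/-- Equation (1): for `J ⊆ {0,…,n}` with `0, n ∈ J` listed as `j_1 < … < j_m`, the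
hypervolume equals `A - Σ_{a=2}^m (j_a - j_{a-1})²/2`, where
`A = -r₁n - r₂n + r₁r₂ + n²/2` (the sum of squared consecutive gaps is expressed as
`Σ_{j ∈ J} gapAfter(J,j)²`, since `gapAfter` vanishes at the maximum `n` of `J`). -/
theorem stmt6 (n : ℕ) (hn : 1 ≤ n) (r₁ r₂ : ℝ) (hr₁ : r₁ ≤ 0) (hr₂ : r₂ ≤ 0)
    (J : Finset ℕ) (hJ : ∀ j ∈ J, j ≤ n) (h0 : 0 ∈ J) (hnJ : n ∈ J)
    (A : ℝ) (hA : A = -r₁ * n - r₂ * n + r₁ * r₂ + (n : ℝ) ^ 2 / 2) :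
    HV n J r₁ r₂ = A - ∑ j ∈ J, (gapAfter J j : ℝ) ^ 2 / 2 :=
  stmt6_general n r₁ r₂ hr₁ hr₂ J hJ h0 hnJ A hA
end

section
/- Let n ≥ 1, let r₁, r₂ ≤ 0 be real numbers, set A := −r₁·n − r₂·n + r₁·r₂ + n²/2, and let J ⊆ {0,1,…,n} be a finite set with 0 ∈ J, n ∈ J, and |J| = m ≥ 2. Then the hypervolume satisfies HV(J, r) ≤ A − n/(2(m−1)). (Upper bound of Lemma 4.) -/
/-!
List `J` increasingly as `0 = x₀ ≤ x₁ ≤ … ≤ x_k = n` with `k = m - 1`. The union of the boxes is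
covered by `[r₁, 0] × [r₂, n]` together with the strips `[xᵢ, xᵢ₊₁] × [r₂, n - xᵢ₊₁]`, and a
telescoping computation turns the total area of this cover into `A - ½ ∑ dᵢ²` with gaps
`dᵢ = xᵢ₊₁ - xᵢ`. Since `∑ dᵢ = n`, Cauchy–Schwarz gives `∑ dᵢ² ≥ n² / k ≥ n / k`.
-/

open MeasureTheory

open Set

theorem Finset.exists_monotone_enumeration {α : Type*} [LinearOrder α] (s : Finset α) {k : ℕ}
    (hs : s.card = k + 1) :
    ∃ x : ℕ → α, Monotone x ∧ (∀ i, x i ∈ s) ∧ ∀ a ∈ s, ∃ i ≤ k, x i = a := by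
  set e := s.orderEmbOfFin hs
  refine ⟨fun i => e ⟨min i k, by omega⟩, fun i j hij => e.monotone ?_,
    fun i => s.orderEmbOfFin_mem hs _, fun a ha => ?_⟩
  · simpa [Fin.le_def] using min_le_min_right k hij
  · obtain ⟨⟨i, hi⟩, rfl⟩ : a ∈ Set.range e := by rwa [s.range_orderEmbOfFin hs]
    exact ⟨i, by omega, by simp [e, Nat.min_eq_left (Nat.le_of_lt_succ hi)]⟩

theorem volume_real_Icc_prod_Icc {a b c d : ℝ} (hac : a ≤ c) (hbd : b ≤ d) :
    volume.real (Icc a c ×ˢ Icc b d) = (c - a) * (d - b) := by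
  rw [Measure.volume_eq_prod, measureReal_prod_prod, Real.volume_real_Icc_of_le hac,
    Real.volume_real_Icc_of_le hbd]

theorem Icc_prod_Icc_subset_union_strip {a b x x' y y' : ℝ} (hy : y' ≤ y) :
    Icc a x' ×ˢ Icc b y' ⊆ Icc a x ×ˢ Icc b y ∪ Icc x x' ×ˢ Icc b y' := by
  rintro ⟨p, q⟩ ⟨⟨hap, hpx'⟩, hbq, hqy'⟩
  rcases le_total p x with hpx | hxp
  · exact Or.inl ⟨⟨hap, hpx⟩, hbq, hqy'.trans hy⟩
  · exact Or.inr ⟨⟨hxp, hpx'⟩, hbq, hqy'⟩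

theorem measureReal_staircase_le (a b : ℝ) {x y : ℕ → ℝ} (hx : Monotone x) (hy : Antitone y)
    (ha : a ≤ x 0) (hb : ∀ i, b ≤ y i) (k : ℕ) :
    volume.real (⋃ i ∈ Finset.range (k + 1), Icc a (x i) ×ˢ Icc b (y i)) ≤
      (x 0 - a) * (y 0 - b) + ∑ i ∈ Finset.range k, (x (i + 1) - x i) * (y (i + 1) - b) := by
  induction k with
  | zero =>
    rw [Finset.range_one, Finset.set_biUnion_singleton, Finset.sum_range_zero, add_zero,
      volume_real_Icc_prod_Icc ha (hb 0)]
  | succ k ih =>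
    set U := ⋃ i ∈ Finset.range (k + 1), Icc a (x i) ×ˢ Icc b (y i)
    set strip := Icc (x k) (x (k + 1)) ×ˢ Icc b (y (k + 1))
    have hU : IsCompact U := (Finset.range (k + 1)).isCompact_biUnion fun _ _ =>
      isCompact_Icc.prod isCompact_Icc
    have hstep : Icc a (x (k + 1)) ×ˢ Icc b (y (k + 1)) ⊆ U ∪ strip :=
      (Icc_prod_Icc_subset_union_strip (hy k.le_succ)).trans <| union_subset_union_left _ <|
        subset_biUnion_of_mem (u := fun i => Icc a (x i) ×ˢ Icc b (y i))
          (Finset.self_mem_range_succ k)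
    have hstrip : volume.real strip = (x (k + 1) - x k) * (y (k + 1) - b) :=
      volume_real_Icc_prod_Icc (hx k.le_succ) (hb _)
    rw [Finset.range_add_one, Finset.set_biUnion_insert, Finset.sum_range_succ]
    calc volume.real (Icc a (x (k + 1)) ×ˢ Icc b (y (k + 1)) ∪ U)
        ≤ volume.real (U ∪ strip) :=
          measureReal_mono (union_subset hstep subset_union_left)
            (hU.union (isCompact_Icc.prod isCompact_Icc)).measure_lt_top.ne
      _ ≤ volume.real U + volume.real strip := measureReal_union_le _ _
      _ ≤ _ := by linarith

theorem two_mul_sum_sub_mul_sub (x : ℕ → ℝ) (c : ℝ) (k : ℕ) :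
    2 * ∑ i ∈ Finset.range k, (x (i + 1) - x i) * (c - x (i + 1)) =
      2 * c * (x k - x 0) - (x k ^ 2 - x 0 ^ 2) -
        ∑ i ∈ Finset.range k, (x (i + 1) - x i) ^ 2 := by
  induction k with
  | zero => simp
  | succ k ih => rw [Finset.sum_range_succ, Finset.sum_range_succ, mul_add, ih]; ring

theorem sq_sub_le_mul_sum_sq_sub (x : ℕ → ℝ) (k : ℕ) :
    (x k - x 0) ^ 2 ≤ k * ∑ i ∈ Finset.range k, (x (i + 1) - x i) ^ 2 := by
  have := sq_sum_le_card_mul_sum_sq (s := Finset.range k) (f := fun i => x (i + 1) - x i)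
  rwa [Finset.sum_range_sub, Finset.card_range] at this

theorem HV_le_sub_sum_sq_gaps {n : ℕ} {r₁ r₂ : ℝ} (hr₁ : r₁ ≤ 0) (hr₂ : r₂ ≤ 0) {J : Finset ℕ}
    {k : ℕ} {x : ℕ → ℕ} (hx : Monotone x) (hxn : ∀ i, x i ≤ n) (hJx : ∀ j ∈ J, ∃ i ≤ k, x i = j)
    (hx0 : x 0 = 0) (hxk : x k = n) :
    HV n J r₁ r₂ ≤ -r₁ * n - r₂ * n + r₁ * r₂ + (n : ℝ) ^ 2 / 2 -
      (∑ i ∈ Finset.range k, ((x (i + 1) : ℝ) - x i) ^ 2) / 2 := by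
  set X : ℕ → ℝ := fun i => x i
  have hX : Monotone X := Nat.mono_cast.comp hx
  have hcover : HV n J r₁ r₂ ≤
      volume.real (⋃ i ∈ Finset.range (k + 1), Icc r₁ (X i) ×ˢ Icc r₂ (n - X i)) := by
    refine measureReal_mono ?_ ((Finset.range (k + 1)).isCompact_biUnion fun _ _ =>
      isCompact_Icc.prod isCompact_Icc).measure_lt_top.ne
    simp only [iUnion_subset_iff]
    intro j hj
    obtain ⟨i, hik, rfl⟩ := hJx j hj
    exact subset_biUnion_of_mem (u := fun i => Icc r₁ (X i) ×ˢ Icc r₂ (n - X i))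
      (Finset.mem_range_succ_iff.mpr hik)
  have hstair := measureReal_staircase_le r₁ r₂ (y := fun i => n - X i) hX
    (fun i j h => sub_le_sub_left (hX h) _) (by simpa [X, hx0] using hr₁)
    (fun i => by have : X i ≤ n := Nat.cast_le.mpr (hxn i); linarith) k
  have hgap := two_mul_sum_sub_mul_sub X (n - r₂) k
  simp only [X, hx0, hxk, Nat.cast_zero] at hstair hgap
  rw [Finset.sum_congr rfl fun i _ => by rw [sub_right_comm]] at hstair
  linarith

theorem stmt7_general (n : ℕ) (r₁ r₂ : ℝ) (hr₁ : r₁ ≤ 0) (hr₂ : r₂ ≤ 0)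
    (A : ℝ) (hA : A = -r₁ * n - r₂ * n + r₁ * r₂ + (n : ℝ) ^ 2 / 2)
    (J : Finset ℕ) (hJ : ∀ j ∈ J, j ≤ n) (h0 : 0 ∈ J) (hnJ : n ∈ J)
    (m : ℕ) (hm : J.card = m) (hm2 : 2 ≤ m) :
    HV n J r₁ r₂ ≤ A - (n : ℝ) / (2 * ((m : ℝ) - 1)) := by
  obtain ⟨k, rfl⟩ : ∃ k, m = k + 1 := ⟨m - 1, by omega⟩
  obtain ⟨x, hx, hxJ, hJx⟩ := J.exists_monotone_enumeration hm
  have hxn (i : ℕ) : x i ≤ n := hJ _ (hxJ i)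
  have hx0 : x 0 = 0 := by
    obtain ⟨i, -, hi⟩ := hJx 0 h0
    have := hx i.zero_le
    omega
  have hxk : x k = n := by
    obtain ⟨i, hik, hi⟩ := hJx n hnJ
    have := hx hik
    have := hxn k
    omega
  have hHV := HV_le_sub_sum_sq_gaps hr₁ hr₂ hx hxn hJx hx0 hxk
  have hcs := sq_sub_le_mul_sum_sq_sub (fun i => (x i : ℝ)) k
  simp only [hx0, hxk, Nat.cast_zero, sub_zero] at hcs
  have hk : (0 : ℝ) < k := by exact_mod_cast (show 0 < k by omega)
  have hn : (n : ℝ) ≤ n ^ 2 := by exact_mod_cast Nat.le_self_pow two_ne_zero n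
  have hS : (n : ℝ) / k ≤ ∑ i ∈ Finset.range k, ((x (i + 1) : ℝ) - x i) ^ 2 := by
    rw [div_le_iff₀ hk]
    linarith
  rw [Nat.cast_add_one, add_sub_cancel_right, div_mul_eq_div_div_swap, hA]
  linarith

/-- Upper bound of Lemma 4: for `J ⊆ {0,…,n}` with `0, n ∈ J` and `|J| = m ≥ 2`,
the hypervolume satisfies `HV(J,r) ≤ A - n/(2(m-1))`, where
`A = -r₁n - r₂n + r₁r₂ + n²/2`. -/
theorem stmt7 (n : ℕ) (hn : 1 ≤ n) (r₁ r₂ : ℝ) (hr₁ : r₁ ≤ 0) (hr₂ : r₂ ≤ 0)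
    (A : ℝ) (hA : A = -r₁ * n - r₂ * n + r₁ * r₂ + (n : ℝ) ^ 2 / 2)
    (J : Finset ℕ) (hJ : ∀ j ∈ J, j ≤ n) (h0 : 0 ∈ J) (hnJ : n ∈ J)
    (m : ℕ) (hm : J.card = m) (hm2 : 2 ≤ m) :
    HV n J r₁ r₂ ≤ A - (n : ℝ) / (2 * ((m : ℝ) - 1)) :=
  stmt7_general n r₁ r₂ hr₁ hr₂ A hA J hJ h0 hnJ m hm hm2
end

section
/- Let n ≥ 1, let r₁, r₂ ≤ 0 be real numbers, set A := −r₁·n − r₂·n + r₁·r₂ + n²/2, and let J ⊆ {0,1,…,n} be a finite set with 0 ∈ J, n ∈ J, and |J| = m ≥ 2. Then the hypervolume satisfies HV(J, r) ≥ A − (m−1)·mei(J)²/2. (Lower bound of Lemma 4.) -/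
/-!
Enumerate `J` as `0 = j₀ < ⋯ < j_{m-1} = n` and prepend `x₀ = r₁ ≤ 0`, so `x_{i+1} = j_i`.
The dominated region contains the pairwise disjoint slabs `(x_i, x_{i+1}] × [r₂, n - x_{i+1}]`.
With `c = n - r₂`, a slab has area
`(x_{i+1} - x_i) (c - x_{i+1}) = ((c - x_i)² - (c - x_{i+1})² - (x_{i+1} - x_i)²) / 2`,
so the areas telescope to `((n - r₁ - r₂)² - r₂² - r₁² - ∑ (j_i - j_{i-1})²) / 2`, which is
`A - ∑ (j_i - j_{i-1})² / 2`; each of the `m - 1` gaps is at most `mei J`.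
-/

open MeasureTheory

open Finset Set

theorem sub_le_mei_of_consecutive {J : Finset ℕ} {a b : ℕ} (ha : a ∈ J) (hb : b ∈ J)
    (hab : a < b) (hnext : ∀ c ∈ J, a < c → b ≤ c) : b - a ≤ mei J := by
  have hne : (J.filter (a < ·)).Nonempty := ⟨b, mem_filter.2 ⟨hb, hab⟩⟩
  have hgap : gapAfter J a = (J.filter (a < ·)).min' hne - a := by
    unfold gapAfter
    rw [← Finset.coe_min' hne]
    rfl
  have hb_le : b ≤ (J.filter (a < ·)).min' hne :=
    le_min' _ _ _ fun c hc => hnext c (mem_filter.1 hc).1 (mem_filter.1 hc).2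
  calc b - a ≤ (J.filter (a < ·)).min' hne - a := Nat.sub_le_sub_right hb_le a
    _ = gapAfter J a := hgap.symm
    _ ≤ mei J := le_sup (f := gapAfter J) ha

theorem exists_monotone_enum_sub_le_mei {J : Finset ℕ} {k : ℕ} (hJ : J.card = k + 1) :
    ∃ s : ℕ → ℕ, Monotone s ∧ (∀ i, s i ∈ J) ∧ (∀ j ∈ J, s 0 ≤ j ∧ j ≤ s k) ∧
      ∀ i, s (i + 1) - s i ≤ mei J := by
  set e := J.orderEmbOfFin hJ
  have he_mem (j : ℕ) (hj : j ∈ J) : ∃ t, e t = j := by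
    rw [← Set.mem_range, range_orderEmbOfFin]; exact hj
  refine ⟨fun i => e ⟨min i k, by omega⟩, fun i j hij => e.monotone ?_,
    fun i => orderEmbOfFin_mem J hJ _, fun j hj => ?_, fun i => ?_⟩
  · exact Fin.mk_le_mk.2 (min_le_min_right k hij)
  · obtain ⟨t, rfl⟩ := he_mem j hj
    exact ⟨e.monotone (Fin.mk_le_mk.2 (by omega)), e.monotone (Fin.mk_le_mk.2 (by omega))⟩
  · rcases lt_or_ge i k with hik | hki
    · simp only [min_eq_left hik.le, min_eq_left (Nat.succ_le_of_lt hik)]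
      refine sub_le_mei_of_consecutive (orderEmbOfFin_mem J hJ _) (orderEmbOfFin_mem J hJ _)
        (e.strictMono (Fin.mk_lt_mk.2 i.lt_succ_self)) fun c hc hlt => ?_
      obtain ⟨t, rfl⟩ := he_mem c hc
      exact e.monotone (Fin.mk_le_mk.2 (e.lt_iff_lt.1 hlt))
    · simp [min_eq_right hki, min_eq_right (hki.trans i.le_succ)]

theorem sum_range_sub_mul_sub_eq (g : ℕ → ℝ) (c : ℝ) (k : ℕ) :
    ∑ i ∈ range k, (g (i + 1) - g i) * (c - g (i + 1)) =
      ((c - g 0) ^ 2 - (c - g k) ^ 2 - ∑ i ∈ range k, (g (i + 1) - g i) ^ 2) / 2 := by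
  have hstep (i : ℕ) : (g (i + 1) - g i) * (c - g (i + 1)) =
      ((c - g i) ^ 2 - (c - g (i + 1)) ^ 2 - (g (i + 1) - g i) ^ 2) / 2 := by ring
  rw [sum_congr rfl fun i _ => hstep i, ← sum_div, sum_sub_distrib,
    sum_range_sub' (fun i => (c - g i) ^ 2)]

theorem sum_range_sub_sq_le {g : ℕ → ℝ} {d : ℝ} (hg : Monotone g)
    (hd : ∀ i, g (i + 1) - g i ≤ d) (k : ℕ) :
    ∑ i ∈ range k, (g (i + 1) - g i) ^ 2 ≤ k * d ^ 2 :=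
  calc ∑ i ∈ range k, (g (i + 1) - g i) ^ 2
      ≤ ∑ i ∈ range k, d ^ 2 :=
        sum_le_sum fun i _ => pow_le_pow_left₀ (sub_nonneg.2 (hg i.le_succ)) (hd i) 2
    _ = k * d ^ 2 := by rw [sum_const, card_range, nsmul_eq_mul]

theorem ofReal_sum_le_volume_biUnion_Icc_prod_Icc {x y : ℕ → ℝ} (hx : Monotone x) (b : ℝ)
    (k : ℕ) :
    ENNReal.ofReal (∑ i ∈ range k, (x (i + 1) - x i) * (y i - b)) ≤
      volume (⋃ i ∈ range k, Icc (x 0) (x (i + 1)) ×ˢ Icc b (y i)) := by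
  set slab : ℕ → Set (ℝ × ℝ) := fun i => Ioc (x i) (x (i + 1)) ×ˢ Icc b (y i)
  have hvol (i : ℕ) :
      volume (slab i) = ENNReal.ofReal (x (i + 1) - x i) * ENNReal.ofReal (y i - b) := by
    rw [Measure.volume_eq_prod, Measure.prod_prod, Real.volume_Ioc, Real.volume_Icc]
  have hslab_ne_top (i : ℕ) : volume (slab i) ≠ ⊤ := by
    rw [hvol]; exact ENNReal.mul_ne_top ENNReal.ofReal_ne_top ENNReal.ofReal_ne_top
  have hslab_sub :
      (⋃ i ∈ range k, slab i) ⊆ ⋃ i ∈ range k, Icc (x 0) (x (i + 1)) ×ˢ Icc b (y i) :=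
    iUnion₂_mono fun i _ => prod_mono (Ioc_subset_Icc_self.trans
      (Icc_subset_Icc_left (hx (Nat.zero_le i)))) le_rfl
  have hfin : volume (⋃ i ∈ range k, Icc (x 0) (x (i + 1)) ×ˢ Icc b (y i)) ≠ ⊤ :=
    ((range k).isCompact_biUnion fun _ _ =>
      isCompact_Icc.prod isCompact_Icc).measure_ne_top
  have hdisj : (↑(range k) : Set ℕ).PairwiseDisjoint slab := fun i _ j _ hij =>
    (hx.pairwise_disjoint_on_Ioc_succ hij).set_prod_left _ _
  rw [ENNReal.ofReal_le_iff_le_toReal hfin]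
  calc ∑ i ∈ range k, (x (i + 1) - x i) * (y i - b)
      ≤ ∑ i ∈ range k, (volume (slab i)).toReal := by
        refine sum_le_sum fun i _ => ?_
        rw [hvol, ENNReal.toReal_mul, ENNReal.toReal_ofReal (sub_nonneg.2 (hx i.le_succ)),
          ENNReal.toReal_ofReal']
        exact mul_le_mul_of_nonneg_left (le_max_left _ _) (sub_nonneg.2 (hx i.le_succ))
    _ = (volume (⋃ i ∈ range k, slab i)).toReal := by
        rw [measure_biUnion_finset hdisj fun i _ => measurableSet_Ioc.prod measurableSet_Icc,
          ENNReal.toReal_sum fun i _ => hslab_ne_top i]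
    _ ≤ _ := ENNReal.toReal_mono hfin (measure_mono hslab_sub)

theorem stmt8_general (n : ℕ) (r₁ r₂ : ℝ) (hr₁ : r₁ ≤ 0)
    (A : ℝ) (hA : A = -r₁ * n - r₂ * n + r₁ * r₂ + (n : ℝ) ^ 2 / 2)
    (J : Finset ℕ) (hJ : ∀ j ∈ J, j ≤ n) (h0 : 0 ∈ J) (hnJ : n ∈ J)
    (m : ℕ) (hm : J.card = m) :
    HV n J r₁ r₂ ≥ A - ((m : ℝ) - 1) * (mei J : ℝ) ^ 2 / 2 := by
  obtain ⟨k, rfl⟩ : ∃ k, m = k + 1 :=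
    Nat.exists_eq_add_one_of_ne_zero (hm ▸ card_ne_zero_of_mem h0)
  obtain ⟨s, hs_mono, hs_mem, hs_bounds, hs_gap⟩ := exists_monotone_enum_sub_le_mei hm
  have hs0 : s 0 = 0 := Nat.le_zero.1 (hs_bounds 0 h0).1
  have hsk : s k = n := le_antisymm (hJ _ (hs_mem k)) (hs_bounds n hnJ).2
  set x : ℕ → ℝ := fun | 0 => r₁ | i + 1 => s i
  have hx : Monotone x := monotone_nat_of_le_succ fun
    | 0 => by simp [x, hs0, hr₁]
    | i + 1 => by simpa [x] using hs_mono i.le_succ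
  have harea : ∑ i ∈ range (k + 1), (x (i + 1) - x i) * ((n - x (i + 1)) - r₂) =
      A - (∑ i ∈ range k, ((s (i + 1) : ℝ) - s i) ^ 2) / 2 := by
    rw [sum_congr rfl fun i _ => by rw [sub_right_comm], sum_range_sub_mul_sub_eq x (n - r₂),
      sum_range_succ']
    simp only [x, hs0, hsk, hA]
    push_cast
    ring
  have hgap (i : ℕ) : (s (i + 1) : ℝ) - s i ≤ mei J := by
    rw [← Nat.cast_sub (hs_mono i.le_succ)]
    exact_mod_cast hs_gap i
  have hgaps := sum_range_sub_sq_le (fun i j h => Nat.cast_le.2 (hs_mono h)) hgap k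
  have hU : (⋃ i ∈ range (k + 1), Icc (x 0) (x (i + 1)) ×ˢ Icc r₂ (n - x (i + 1))) ⊆
      ⋃ j ∈ J, Icc r₁ (j : ℝ) ×ˢ Icc r₂ ((n : ℝ) - (j : ℝ)) :=
    iUnion₂_subset fun i _ => subset_iUnion₂_of_subset (s i) (hs_mem i) subset_rfl
  rw [HV, ge_iff_le, ← ENNReal.ofReal_le_iff_le_toReal ((J.isCompact_biUnion fun _ _ =>
      isCompact_Icc.prod isCompact_Icc).measure_ne_top)]
  calc ENNReal.ofReal (A - ((↑(k + 1) : ℝ) - 1) * (mei J : ℝ) ^ 2 / 2)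
      ≤ ENNReal.ofReal (∑ i ∈ range (k + 1), (x (i + 1) - x i) * ((n - x (i + 1)) - r₂)) := by
        refine ENNReal.ofReal_le_ofReal ?_
        rw [harea]; push_cast; linarith
    _ ≤ _ := ofReal_sum_le_volume_biUnion_Icc_prod_Icc hx r₂ (k + 1)
    _ ≤ _ := measure_mono hU

/-- Lower bound of Lemma 4: for `J ⊆ {0,…,n}` with `0, n ∈ J` and `|J| = m ≥ 2`,
the hypervolume satisfies `HV(J,r) ≥ A - (m-1)·mei(J)²/2`, where
`A = -r₁n - r₂n + r₁r₂ + n²/2`. -/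
theorem stmt8 (n : ℕ) (hn : 1 ≤ n) (r₁ r₂ : ℝ) (hr₁ : r₁ ≤ 0) (hr₂ : r₂ ≤ 0)
    (A : ℝ) (hA : A = -r₁ * n - r₂ * n + r₁ * r₂ + (n : ℝ) ^ 2 / 2)
    (J : Finset ℕ) (hJ : ∀ j ∈ J, j ≤ n) (h0 : 0 ∈ J) (hnJ : n ∈ J)
    (m : ℕ) (hm : J.card = m) (hm2 : 2 ≤ m) :
    HV n J r₁ r₂ ≥ A - ((m : ℝ) - 1) * (mei J : ℝ) ^ 2 / 2 :=
  stmt8_general n r₁ r₂ hr₁ A hA J hJ h0 hnJ m hm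
end

section
/- Let n ≥ 7 be odd and N = (n+1)/2, and let c > 1 be a real number. Then the number of N-element subsets T of {1, …, n−1} such that mei(S_T) ≥ c·log_{3/2} n (as real numbers), where S_T := {0, n} ∪ ({1,…,n−1} \ T), is at most n^{1−c} · C(n−1, N). Equivalently, if T is uniform among N-element subsets of {1,…,n−1}, then Pr[mei(S_T) ≥ c·log_{3/2} n] ≤ n^{1−c}. (Tail bound of Lemma bigMEI.) -/
/-- The set of first objective values surviving when the removed set is `T`:
`S_T = {0, n} ∪ ({1,…,n-1} \ T)`. -/
def STn (n : ℕ) (T : Finset ℕ) : Finset ℕ :=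
  insert 0 (insert n ((Finset.Icc 1 (n - 1)) \ T))

open Finset

theorem card_powersetCard_filter_superset_disjoint_le {α : Type*} [DecidableEq α]
    (A I B : Finset α) (N : ℕ) :
    #{T ∈ A.powersetCard N | I ⊆ T ∧ Disjoint B T} ≤ (#(A \ (I ∪ B))).choose (N - #I) := by
  rw [← card_powersetCard]
  refine card_le_card_of_injOn (· \ I) (fun T hT => ?_) (fun T₁ hT₁ T₂ hT₂ h => ?_)
  · simp only [coe_filter, mem_powersetCard, Set.mem_ofPred_eq] at hT
    obtain ⟨⟨hTA, hTN⟩, hIT, hBT⟩ := hT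
    rw [mem_coe, mem_powersetCard]
    refine ⟨fun x hx => ?_, by rw [card_sdiff_of_subset hIT, hTN]⟩
    simp only [mem_sdiff, mem_union] at hx ⊢
    exact ⟨hTA hx.1, not_or.2 ⟨hx.2, fun hB => disjoint_left.1 hBT hB hx.1⟩⟩
  · simp only [coe_filter, Set.mem_ofPred_eq] at hT₁ hT₂
    rw [← sdiff_union_of_subset hT₁.2.1, ← sdiff_union_of_subset hT₂.2.1]
    exact congrArg (· ∪ I) h

theorem three_mul_choose_le_two_mul_choose_succ {a b : ℕ} (h : 3 * (b + 1) ≤ 2 * (a + 1)) :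
    3 * a.choose b ≤ 2 * (a + 1).choose (b + 1) := by
  have key := Nat.add_one_mul_choose_eq a b
  refine Nat.le_of_mul_le_mul_right ?_ a.succ_pos
  calc 3 * a.choose b * (a + 1) = (a + 1).choose (b + 1) * (3 * (b + 1)) := by
        rw [mul_assoc, mul_comm _ (a + 1), key]; ring
    _ ≤ (a + 1).choose (b + 1) * (2 * (a + 1)) := Nat.mul_le_mul_left _ h
    _ = 2 * (a + 1).choose (b + 1) * (a + 1) := by ring

theorem choose_sub_sub_le_two_thirds_pow_mul {m N k : ℕ} (h : 3 * N ≤ 2 * m) (hk : k ≤ N) :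
    ((m - k).choose (N - k) : ℝ) ≤ (2 / 3) ^ k * m.choose N := by
  induction k with
  | zero => simp
  | succ k ih =>
    have hstep₀ := three_mul_choose_le_two_mul_choose_succ
      (a := m - (k + 1)) (b := N - (k + 1)) (by omega)
    rw [show m - (k + 1) + 1 = m - k by omega, show N - (k + 1) + 1 = N - k by omega] at hstep₀
    have hstep : ((m - (k + 1)).choose (N - (k + 1)) : ℝ) ≤ 2 / 3 * (m - k).choose (N - k) := by
      have := (Nat.cast_le (α := ℝ)).2 hstep₀
      push_cast at this
      linarith
    calc _ ≤ 2 / 3 * ((m - k).choose (N - k) : ℝ) := hstep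
      _ ≤ 2 / 3 * ((2 / 3) ^ k * m.choose N) := by gcongr; exact ih (by omega)
      _ = _ := by ring

theorem choose_add_mul_choose_eq (a b : ℕ) :
    (a + 1).choose b + (a + 1) * a.choose b = (a + 2 - b) * (a + 1).choose b := by
  rcases le_or_gt b (a + 1) with hb | hb
  · rw [mul_comm (a + 1), Nat.choose_mul_succ_eq, show a + 2 - b = a + 1 - b + 1 by omega]
    ring
  · rw [Nat.choose_eq_zero_of_lt hb, Nat.choose_eq_zero_of_lt (by omega : a < b)]
    simp

theorem exists_gap_of_le_mei {J : Finset ℕ} {L : ℕ} (hL : 0 < L) (h : L ≤ mei J) :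
    ∃ a ∈ J, ∃ b ∈ J, a + L ≤ b ∧ ∀ x ∈ J, a < x → b ≤ x := by
  obtain ⟨a, haJ, hgap⟩ := (Finset.le_sup_iff (show ⊥ < L from hL)).1 h
  have hne : {b ∈ J | a < b}.Nonempty := by
    by_contra hemp
    rw [not_nonempty_iff_eq_empty] at hemp
    simp [gapAfter, hemp] at hgap
    omega
  obtain ⟨hbJ, hab⟩ := mem_filter.1 (min'_mem _ hne)
  refine ⟨a, haJ, _, hbJ, ?_, fun x hxJ hax => min'_le _ x (mem_filter.2 ⟨hxJ, hax⟩)⟩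
  rw [gapAfter, ← coe_min' hne, WithTop.untopD_coe] at hgap
  omega

theorem exists_run_of_lt_mei {n k : ℕ} {T : Finset ℕ} (hT : T ⊆ Icc 1 (n - 1))
    (h : k < mei (STn n T)) : ∃ j, j + k < n ∧ j ∉ T ∧ Icc (j + 1) (j + k) ⊆ T := by
  have mem_STn : ∀ x, x ∈ STn n T ↔ x = 0 ∨ x = n ∨ (x ∈ Icc 1 (n - 1) ∧ x ∉ T) := by
    simp [STn]
  obtain ⟨a, haS, b, hbS, hab, hmin⟩ := exists_gap_of_le_mei k.succ_pos h
  have hbn : b ≤ n := by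
    rcases (mem_STn b).1 hbS with hb | hb | ⟨hb, -⟩ <;> simp_all
    omega
  refine ⟨a, by omega, ?_, fun x hx => ?_⟩
  · rcases (mem_STn a).1 haS with rfl | rfl | ⟨-, ha⟩
    · exact fun h0 => by simpa using hT h0
    · omega
    · exact ha
  · rw [mem_Icc] at hx
    by_contra hxT
    have := hmin x ((mem_STn x).2 (.inr (.inr ⟨mem_Icc.2 ⟨by omega, by omega⟩, hxT⟩))) (by omega)
    omega

theorem le_card_of_lt_mei {n k : ℕ} {T : Finset ℕ} (hT : T ⊆ Icc 1 (n - 1))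
    (h : k < mei (STn n T)) : k ≤ #T := by
  obtain ⟨j, -, -, hrun⟩ := exists_run_of_lt_mei hT h
  simpa using card_le_card hrun

theorem card_filter_lt_mei_le (n N k : ℕ) :
    #{T ∈ (Icc 1 (n - 1)).powersetCard N | k < mei (STn n T)}
      ≤ (n - 1 - k).choose (N - k) + (n - 1 - k) * (n - 2 - k).choose (N - k) := by
  set A := Icc 1 (n - 1)
  let G : ℕ → Finset (Finset ℕ) := fun j =>
    {T ∈ A.powersetCard N | Icc (j + 1) (j + k) ⊆ T ∧ Disjoint {j} T}
  have hcover : {T ∈ A.powersetCard N | k < mei (STn n T)}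
      ⊆ G 0 ∪ (Icc 1 (n - 1 - k)).biUnion G := by
    intro T hT
    obtain ⟨hTN, hmei⟩ := mem_filter.1 hT
    obtain ⟨j, hjn, hjT, hrun⟩ := exists_run_of_lt_mei (mem_powersetCard.1 hTN).1 hmei
    have hG : T ∈ G j := mem_filter.2 ⟨hTN, hrun, disjoint_singleton_left.2 hjT⟩
    rcases Nat.eq_zero_or_pos j with rfl | hj
    · exact mem_union_left _ hG
    · exact mem_union_right _ (mem_biUnion.2 ⟨j, mem_Icc.2 ⟨hj, by omega⟩, hG⟩)
  have hG0 : #(G 0) ≤ (n - 1 - k).choose (N - k) := by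
    refine (card_powersetCard_filter_superset_disjoint_le ..).trans ?_
    rw [zero_add, zero_add, Nat.card_Icc, Nat.add_sub_cancel]
    refine Nat.choose_le_choose _ ?_
    calc #(A \ (Icc 1 k ∪ {0})) ≤ #(Icc (k + 1) (n - 1)) :=
          card_le_card fun x hx => by simp [A] at hx ⊢; omega
      _ = n - 1 - k := by rw [Nat.card_Icc]; omega
  have hGj : ∀ j ∈ Icc 1 (n - 1 - k), #(G j) ≤ (n - 2 - k).choose (N - k) := by
    intro j hj
    rw [mem_Icc] at hj
    refine (card_powersetCard_filter_superset_disjoint_le ..).trans ?_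
    rw [Nat.card_Icc, show j + k + 1 - (j + 1) = k by omega]
    refine Nat.choose_le_choose _ ?_
    calc #(A \ (Icc (j + 1) (j + k) ∪ {j})) ≤ #(Icc 1 (j - 1) ∪ Icc (j + k + 1) (n - 1)) :=
          card_le_card fun x hx => by simp [A] at hx ⊢; omega
      _ ≤ #(Icc 1 (j - 1)) + #(Icc (j + k + 1) (n - 1)) := card_union_le _ _
      _ = n - 2 - k := by simp; omega
  calc _ ≤ #(G 0 ∪ (Icc 1 (n - 1 - k)).biUnion G) := card_le_card hcover
    _ ≤ #(G 0) + ∑ j ∈ Icc 1 (n - 1 - k), #(G j) :=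
        (card_union_le _ _).trans (Nat.add_le_add_left card_biUnion_le _)
    _ ≤ _ := add_le_add hG0 (by simpa using sum_le_card_nsmul _ _ _ hGj)

theorem card_filter_lt_mei_le_two_thirds_pow {n N k : ℕ} (hn : 7 ≤ n) (h2N : 2 * N = n + 1)
    (hk : k ≤ N) :
    (#{T ∈ (Icc 1 (n - 1)).powersetCard N | k < mei (STn n T)} : ℝ)
      ≤ ((n : ℝ) - 1) / 2 * ((2 / 3) ^ k * (n - 1).choose N) := by
  have hsum := choose_add_mul_choose_eq (n - 2 - k) (N - k)
  rw [show n - 2 - k + 1 = n - 1 - k by omega, show n - 2 - k + 2 - (N - k) = n - N by omega]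
    at hsum
  have h2N' : 2 * (N : ℝ) = n + 1 := by exact_mod_cast h2N
  have hn' : (7 : ℝ) ≤ n := by exact_mod_cast hn
  calc _ ≤ (((n - N) * (n - 1 - k).choose (N - k) : ℕ) : ℝ) := by
        exact_mod_cast (card_filter_lt_mei_le n N k).trans_eq hsum
    _ = ((n : ℝ) - 1) / 2 * (n - 1 - k).choose (N - k) := by
        rw [Nat.cast_mul, Nat.cast_sub (by omega)]
        congr 1
        linarith
    _ ≤ _ := by
        gcongr
        · linarith
        · exact choose_sub_sub_le_two_thirds_pow_mul (by omega) hk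

theorem half_pred_mul_two_thirds_pow_le {n k : ℕ} {c : ℝ} (hn : 0 < n)
    (h : c * Real.logb (3 / 2) n ≤ k + 1) :
    ((n : ℝ) - 1) / 2 * (2 / 3) ^ k ≤ (n : ℝ) ^ (1 - c) := by
  have hn' : (0 : ℝ) < n := by exact_mod_cast hn
  have hpow : (2 / 3 : ℝ) ^ (k + 1) ≤ (n : ℝ) ^ (-c) := by
    rw [Real.rpow_neg hn'.le, show (2 / 3 : ℝ) = (3 / 2)⁻¹ by norm_num, inv_pow]
    refine inv_anti₀ (by positivity) ?_
    calc (n : ℝ) ^ c = (3 / 2) ^ (c * Real.logb (3 / 2) n) := by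
          rw [mul_comm, Real.rpow_mul (by norm_num),
            Real.rpow_logb (by norm_num) (by norm_num) hn']
      _ ≤ (3 / 2) ^ ((k + 1 : ℕ) : ℝ) :=
          Real.rpow_le_rpow_of_exponent_le (by norm_num) (by exact_mod_cast h)
      _ = _ := Real.rpow_natCast _ _
  rw [show 1 - c = 1 + -c by ring, Real.rpow_add hn', Real.rpow_one]
  calc ((n : ℝ) - 1) / 2 * (2 / 3) ^ k = ((n : ℝ) - 1) * 3 / 4 * (2 / 3) ^ (k + 1) := by ring
    _ ≤ n * (n : ℝ) ^ (-c) := mul_le_mul (by linarith) hpow (by positivity) (by positivity)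

/-- Tail bound of Lemma `bigMEI`: for odd `n ≥ 7`, `N = (n+1)/2` and any constant
`c > 1`, the number of `N`-element subsets `T` of `{1,…,n-1}` with
`mei(S_T) ≥ c·log_{3/2} n` is at most `n^{1-c}·C(n-1, N)`. -/
theorem stmt12 (n N : ℕ) (hn : 7 ≤ n) (hodd : Odd n) (hN : N = (n + 1) / 2)
    (c : ℝ) (hc : 1 < c) :
    (((((Finset.Icc 1 (n - 1)).powersetCard N).filter
        (fun T => c * Real.logb (3 / 2) n ≤ (mei (STn n T) : ℝ))).card : ℝ))
      ≤ (n : ℝ) ^ ((1 : ℝ) - c) * ((n - 1).choose N : ℝ) := by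
  have h2N : 2 * N = n + 1 := by obtain ⟨m, rfl⟩ := hodd; omega
  have hx : 0 < c * Real.logb (3 / 2) n :=
    mul_pos (by linarith) (Real.logb_pos (by norm_num) (by exact_mod_cast (by omega : 1 < n)))
  obtain ⟨k, hk⟩ := Nat.exists_eq_add_one.2 (Nat.ceil_pos.2 hx)
  have hkc : c * Real.logb (3 / 2) n ≤ k + 1 := by exact_mod_cast hk ▸ Nat.le_ceil _
  have hF : ((Icc 1 (n - 1)).powersetCard N).filter
        (fun T => c * Real.logb (3 / 2) n ≤ (mei (STn n T) : ℝ))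
      = {T ∈ (Icc 1 (n - 1)).powersetCard N | k < mei (STn n T)} :=
    filter_congr fun T _ => by rw [← Nat.ceil_le, hk, Nat.add_one_le_iff]
  rw [hF]
  rcases eq_empty_or_nonempty {T ∈ (Icc 1 (n - 1)).powersetCard N | k < mei (STn n T)}
    with hempty | ⟨T, hT⟩
  · rw [hempty, card_empty, Nat.cast_zero]
    positivity
  obtain ⟨hTN, hmei⟩ := mem_filter.1 hT
  have hkN : k ≤ N := (mem_powersetCard.1 hTN).2 ▸ le_card_of_lt_mei (mem_powersetCard.1 hTN).1 hmei
  calc _ ≤ ((n : ℝ) - 1) / 2 * ((2 / 3) ^ k * (n - 1).choose N) :=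
        card_filter_lt_mei_le_two_thirds_pow hn h2N hkN
    _ ≤ (n : ℝ) ^ ((1 : ℝ) - c) * (n - 1).choose N := by
        rw [← mul_assoc]
        gcongr
        exact half_pred_mul_two_thirds_pow_le (by omega) hkc
end

section
/- Let n ≥ 7 be odd and N = (n+1)/2. Then the average of mei(S_T) over all N-element subsets T of {1, …, n−1}, where S_T := {0, n} ∪ ({1,…,n−1} \ T), satisfies (1/C(n−1, N)) · Σ_T mei(S_T) ≤ log_{3/2} n + 3. (Expectation upper bound of Lemma bigMEI: E[mei(P_{t+1})] ≤ log_{3/2} n + O(1).) -/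
/-!
Summing tails, `∑_T mei(S_T) = ∑_{k<n} #{T | k < mei(S_T)}`. If `mei(S_T) > k`, then `T`
contains a block `{a+1, …, a+k}` of `k` consecutive inner points, and there are fewer than `n`
such blocks. A fixed `k`-set lies in a uniform `N`-subset of the `n - 1` inner points with
probability at most `(N/(n-1))^k ≤ (2/3)^k`, so the `k`-th averaged tail is at most
`min 1 (n (2/3)^k)`. With `L = log_{3/2} n` and `K = ⌈L⌉`, the first `K` tails contribute at
most `K` and the rest a geometric series `≤ 3 n (2/3)^K = 3 (2/3)^(K-L)`; Bernoulli's inequality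
`(2/3)^ε ≤ 1 - ε/3` for `ε = K - L ∈ [0, 1)` turns `K + 3 (2/3)^(K-L)` into at most `L + 3`.
-/

open Finset Real

lemma sum_eq_sum_range_card_filter_lt {α : Type*} (s : Finset α) (f : α → ℕ) {M : ℕ}
    (hf : ∀ x ∈ s, f x ≤ M) :
    ∑ x ∈ s, f x = ∑ k ∈ range M, #{x ∈ s | k < f x} := by
  calc ∑ x ∈ s, f x = ∑ x ∈ s, #{k ∈ range M | k < f x} := by
        refine sum_congr rfl fun x hx => ?_
        have : {k ∈ range M | k < f x} = range (f x) := by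
          ext k
          simp only [mem_filter, mem_range]
          have := hf x hx
          omega
        rw [this, card_range]
    _ = ∑ k ∈ range M, #{x ∈ s | k < f x} := by
        simp only [card_filter]
        exact sum_comm

section Gap

variable {J : Finset ℕ} {a : ℕ}

lemma gapAfter_eq_zero (h : ¬{b ∈ J | a < b}.Nonempty) : gapAfter J a = 0 := by
  rw [gapAfter, not_nonempty_iff_eq_empty.1 h, min_empty, WithTop.untopD_top, Nat.sub_self]

lemma gapAfter_eq_min' (h : {b ∈ J | a < b}.Nonempty) :
    gapAfter J a = {b ∈ J | a < b}.min' h - a := by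
  rw [gapAfter, ← coe_min' h, WithTop.untopD_coe]

lemma gapAfter_le {n : ℕ} (hJ : ∀ b ∈ J, b ≤ n) : gapAfter J a ≤ n := by
  by_cases h : {b ∈ J | a < b}.Nonempty
  · rw [gapAfter_eq_min' h]
    have := hJ _ (mem_filter.1 (min'_mem _ h)).1
    omega
  · rw [gapAfter_eq_zero h]
    exact Nat.zero_le n

lemma exists_disjoint_Ioo_of_lt_gapAfter {k : ℕ} (hk : k < gapAfter J a) :
    ∃ b ∈ J, a + k < b ∧ Disjoint (Ioo a b) J := by
  by_cases h : {b ∈ J | a < b}.Nonempty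
  · rw [gapAfter_eq_min' h] at hk
    refine ⟨_, (mem_filter.1 (min'_mem _ h)).1, by omega, disjoint_left.2 fun x hx hxJ => ?_⟩
    rw [mem_Ioo] at hx
    exact hx.2.not_ge (min'_le _ x (mem_filter.2 ⟨hxJ, hx.1⟩))
  · rw [gapAfter_eq_zero h] at hk
    exact absurd hk (Nat.not_lt_zero k)

lemma mei_le {n : ℕ} (hJ : ∀ b ∈ J, b ≤ n) : mei J ≤ n :=
  Finset.sup_le fun _ _ => gapAfter_le hJ

lemma exists_disjoint_Ioo_of_lt_mei {k : ℕ} (hk : k < mei J) :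
    ∃ a ∈ J, ∃ b ∈ J, a + k < b ∧ Disjoint (Ioo a b) J := by
  obtain ⟨a, ha, hk⟩ := Finset.lt_sup_iff.1 hk
  exact ⟨a, ha, exists_disjoint_Ioo_of_lt_gapAfter hk⟩

end Gap

section STn

variable {n : ℕ} {T : Finset ℕ}

lemma le_of_mem_STn {b : ℕ} (hb : b ∈ STn n T) : b ≤ n := by
  simp only [STn, mem_insert, mem_sdiff, mem_Icc] at hb
  omega

lemma mem_STn_of_notMem {x : ℕ} (h1 : 1 ≤ x) (hn : x < n) (hx : x ∉ T) : x ∈ STn n T := by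
  simp only [STn, mem_insert, mem_sdiff, mem_Icc]
  exact Or.inr (Or.inr ⟨⟨h1, by omega⟩, hx⟩)

lemma exists_Icc_subset_of_lt_mei_STn {k : ℕ} (hk : k < mei (STn n T)) :
    ∃ a, a + k < n ∧ Icc (a + 1) (a + k) ⊆ T := by
  obtain ⟨a, -, b, hb, hab, hdisj⟩ := exists_disjoint_Ioo_of_lt_mei hk
  have hbn := le_of_mem_STn hb
  refine ⟨a, by omega, fun x hx => ?_⟩
  rw [mem_Icc] at hx
  by_contra hxT
  exact disjoint_left.1 hdisj (mem_Ioo.2 ⟨by omega, by omega⟩)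
    (mem_STn_of_notMem (by omega) (by omega) hxT)

end STn

lemma choose_sub_le_pow_mul_choose {m r j : ℕ} (hrm : r ≤ m) (hjr : j ≤ r) :
    ((m - j).choose (r - j) : ℝ) ≤ ((r : ℝ) / m) ^ j * m.choose r := by
  induction j with
  | zero => simp
  | succ j ih =>
    obtain ⟨b, rfl⟩ : ∃ b, r = j + 1 + b := ⟨r - (j + 1), by omega⟩
    obtain ⟨a, rfl⟩ : ∃ a, m = j + 1 + a := ⟨m - (j + 1), by omega⟩
    rw [show j + 1 + a - j = a + 1 by omega, show j + 1 + b - j = b + 1 by omega] at ih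
    rw [Nat.add_sub_cancel_left, Nat.add_sub_cancel_left]
    set ρ : ℝ := ((j + 1 + b : ℕ) : ℝ) / (j + 1 + a : ℕ)
    have hpascal : ((a + 1) * a.choose b : ℝ) = (a + 1).choose (b + 1) * (b + 1) := by
      exact_mod_cast Nat.add_one_mul_choose_eq a b
    have hstep : ((b : ℝ) + 1) / (a + 1) ≤ ρ := by
      rw [div_le_div_iff₀ (by positivity) (by positivity)]
      have : (b : ℝ) ≤ a := by exact_mod_cast (by omega : b ≤ a)
      push_cast
      nlinarith
    calc (a.choose b : ℝ) = (a + 1).choose (b + 1) * ((b + 1) / (a + 1)) := by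
          field_simp
          linarith
      _ ≤ (ρ ^ j * (j + 1 + a).choose (j + 1 + b)) * ρ :=
          mul_le_mul (ih (by omega)) hstep (by positivity) (by positivity)
      _ = ρ ^ (j + 1) * (j + 1 + a).choose (j + 1 + b) := by ring

lemma card_filter_powersetCard_subset_le {α : Type*} [DecidableEq α] (s t : Finset α) (n : ℕ)
    (hst : s ⊆ t) :
    (#{u ∈ t.powersetCard n | s ⊆ u} : ℝ) ≤ ((n : ℝ) / #t) ^ #s * (#t).choose n := by
  by_cases hsn : #s ≤ n
  · by_cases hnt : n ≤ #t
    · rw [card_filter_powersetCard_subset s t n hst hsn]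
      exact choose_sub_le_pow_mul_choose hnt hsn
    · rw [powersetCard_eq_empty.2 (by omega), filter_empty, card_empty, Nat.cast_zero]
      positivity
  · have : {u ∈ t.powersetCard n | s ⊆ u} = ∅ := filter_eq_empty_iff.2 fun u hu hsu =>
      hsn ((card_le_card hsu).trans (mem_powersetCard.1 hu).2.le)
    rw [this, card_empty, Nat.cast_zero]
    positivity

lemma card_filter_lt_mei_STn_le (n N k : ℕ) :
    (#{T ∈ (Icc 1 (n - 1)).powersetCard N | k < mei (STn n T)} : ℝ) ≤
      n * ((N : ℝ) / (n - 1 : ℕ)) ^ k * (n - 1).choose N := by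
  set P := (Icc 1 (n - 1)).powersetCard N
  have hcover : {T ∈ P | k < mei (STn n T)} ⊆
      (range (n - k)).biUnion fun a => {T ∈ P | Icc (a + 1) (a + k) ⊆ T} := by
    intro T hT
    rw [mem_filter] at hT
    obtain ⟨a, ha, hsub⟩ := exists_Icc_subset_of_lt_mei_STn hT.2
    exact mem_biUnion.2 ⟨a, mem_range.2 (by omega), mem_filter.2 ⟨hT.1, hsub⟩⟩
  have hterm : ∀ a ∈ range (n - k), (#{T ∈ P | Icc (a + 1) (a + k) ⊆ T} : ℝ) ≤
      ((N : ℝ) / (n - 1 : ℕ)) ^ k * (n - 1).choose N := by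
    intro a ha
    rw [mem_range] at ha
    have hsub : Icc (a + 1) (a + k) ⊆ Icc 1 (n - 1) := Icc_subset_Icc (by omega) (by omega)
    simpa using card_filter_powersetCard_subset_le _ _ N hsub
  calc (#{T ∈ P | k < mei (STn n T)} : ℝ)
      ≤ #((range (n - k)).biUnion fun a => {T ∈ P | Icc (a + 1) (a + k) ⊆ T}) := by
        exact_mod_cast card_le_card hcover
    _ ≤ ∑ a ∈ range (n - k), (#{T ∈ P | Icc (a + 1) (a + k) ⊆ T} : ℝ) := by
        exact_mod_cast card_biUnion_le
    _ ≤ ∑ a ∈ range (n - k), ((N : ℝ) / (n - 1 : ℕ)) ^ k * (n - 1).choose N :=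
        sum_le_sum hterm
    _ ≤ n * ((N : ℝ) / (n - 1 : ℕ)) ^ k * (n - 1).choose N := by
        rw [sum_const, card_range, nsmul_eq_mul, mul_assoc]
        gcongr
        exact_mod_cast Nat.sub_le n k

lemma sum_range_min_one_mul_pow_le {q x : ℝ} (hq0 : 0 < q) (hq1 : q < 1) (hx : 1 ≤ x) (M : ℕ) :
    ∑ k ∈ range M, min 1 (x * q ^ k) ≤ logb q⁻¹ x + (1 - q)⁻¹ := by
  set L := logb q⁻¹ x
  have hL : 0 ≤ L := logb_nonneg ((one_lt_inv₀ hq0).2 hq1) hx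
  set K := ⌈L⌉₊
  have hLK : L ≤ K := Nat.le_ceil L
  have hKL : (K : ℝ) < L + 1 := Nat.ceil_lt_add_one hL
  have hxq : x * q ^ K = q ^ ((K : ℝ) - L) := by
    have hx' : x = (q ^ L)⁻¹ := by
      rw [← inv_rpow hq0.le, rpow_logb (inv_pos.2 hq0) (ne_of_gt ((one_lt_inv₀ hq0).2 hq1))
        (by linarith)]
    rw [rpow_sub hq0, rpow_natCast, hx']
    field_simp
  have hbernoulli : q ^ ((K : ℝ) - L) ≤ 1 + ((K : ℝ) - L) * (q - 1) := by
    simpa using rpow_one_add_le_one_add_mul_self (s := q - 1) (by linarith)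
      (sub_nonneg.2 hLK) (by linarith)
  calc ∑ k ∈ range M, min 1 (x * q ^ k) ≤ ∑ k ∈ range (K + M), min 1 (x * q ^ k) :=
        sum_le_sum_of_subset_of_nonneg (range_mono (by omega)) fun _ _ _ => by positivity
    _ = ∑ k ∈ range K, min 1 (x * q ^ k) + ∑ k ∈ Ico K (K + M), min 1 (x * q ^ k) :=
        (sum_range_add_sum_Ico _ (by omega)).symm
    _ ≤ ∑ k ∈ range K, 1 + ∑ k ∈ Ico K (K + M), x * q ^ k :=
        add_le_add (sum_le_sum fun _ _ => min_le_left _ _) (sum_le_sum fun _ _ => min_le_right _ _)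
    _ ≤ K + x * (q ^ K / (1 - q)) := by
        rw [sum_const, card_range, nsmul_one, ← mul_sum]
        gcongr
        exact geom_sum_Ico_le_of_lt_one hq0.le hq1
    _ = K + q ^ ((K : ℝ) - L) / (1 - q) := by rw [← hxq, mul_div_assoc]
    _ ≤ L + (1 - q)⁻¹ := by
        have h1q : 0 < 1 - q := by linarith
        have : q ^ ((K : ℝ) - L) / (1 - q) ≤ (1 - q)⁻¹ - (K - L) := by
          rw [div_le_iff₀ h1q, sub_mul, inv_mul_cancel₀ h1q.ne']
          linarith
        linarith

theorem stmt13_general (n N : ℕ) (hn : 7 ≤ n) (hN : N = (n + 1) / 2) :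
    ((∑ T ∈ (Finset.Icc 1 (n - 1)).powersetCard N, mei (STn n T) : ℕ) : ℝ) /
        ((n - 1).choose N : ℝ)
      ≤ Real.logb (3 / 2) n + 3 := by
  set P := (Icc 1 (n - 1)).powersetCard N
  have hC : (0 : ℝ) < (n - 1).choose N := by exact_mod_cast Nat.choose_pos (by omega)
  have hP : (#P : ℝ) = (n - 1).choose N := by simp [P]
  -- `N / (n - 1) ≤ (n + 1) / (2 (n - 1))`, which is at most `2/3` exactly when `n ≥ 7`
  have hratio : (N : ℝ) / (n - 1 : ℕ) ≤ 2 / 3 := by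
    rw [div_le_div_iff₀ (by exact_mod_cast (by omega : 0 < n - 1)) (by norm_num)]
    exact_mod_cast (by omega : N * 3 ≤ 2 * (n - 1))
  have hcount (k : ℕ) : (#{T ∈ P | k < mei (STn n T)} : ℝ) / (n - 1).choose N ≤
      min 1 ((n : ℝ) * (2 / 3) ^ k) := by
    refine le_min ?_ ?_
    · rw [div_le_one hC, ← hP]
      exact_mod_cast card_filter_le _ _
    · rw [div_le_iff₀ hC]
      refine (card_filter_lt_mei_STn_le n N k).trans ?_
      gcongr
  rw [sum_eq_sum_range_card_filter_lt P _ fun T _ => mei_le fun _ => le_of_mem_STn, Nat.cast_sum,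
    sum_div]
  calc _ ≤ ∑ k ∈ range n, min 1 (n * (2 / 3 : ℝ) ^ k) := sum_le_sum fun k _ => hcount k
    _ ≤ logb (2 / 3)⁻¹ n + (1 - 2 / 3)⁻¹ :=
        sum_range_min_one_mul_pow_le (by norm_num) (by norm_num) (by norm_cast; omega) n
    _ = logb (3 / 2) n + 3 := by norm_num

/-- Expectation bound of Lemma `bigMEI`: for odd `n ≥ 7` and `N = (n+1)/2`, the
average of `mei(S_T)` over all `N`-element subsets `T` of `{1,…,n-1}` is at most
`log_{3/2} n + 3`. -/
theorem stmt13 (n N : ℕ) (hn : 7 ≤ n) (hodd : Odd n) (hN : N = (n + 1) / 2) :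
    ((∑ T ∈ (Finset.Icc 1 (n - 1)).powersetCard N, mei (STn n T) : ℕ) : ℝ) /
        ((n - 1).choose N : ℝ)
      ≤ Real.logb (3 / 2) n + 3 :=
  stmt13_general n N hn hN
end

section
/- Let n, i₁, i₂ be integers with 1 ≤ i₁, i₁ + 2 ≤ i₂, and i₂ ≤ n − 1. Then there exists an integer i₃ with i₁ < i₃ < i₂ such that both (i₂ − i₃)/(n − i₂) ≥ (i₂ − i₁ − 1)/(n − (i₂ − i₁)) and (i₃ − i₁)/i₁ ≥ (i₂ − i₁ − 1)/(n − (i₂ − i₁)). (Intermediate claim in the proof of Lemma 3: any point (i₃, n−i₃) strictly between two consecutive covered points (i₁, n−i₁) and (i₂, n−i₂) forces ε ≥ min{(i₂−i₃)/(n−i₂), (i₃−i₁)/i₁}, and a suitable integer choice of i₃ makes this minimum at least (i₂−i₁−1)/(n−(i₂−i₁)).) -/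
/-!
Write `a = n - i₂`, `b = i₁` and `d = i₂ - i₁ - 1`, so that the target is `d / (a + b)`.
With `i₃ = i₁ + k` the two inequalities read `k ≥ x` and `k ≤ x + 1` for `x = d b / (a + b)`,
so `k = ⌈x⌉` works; `0 < x ≤ d` keeps `i₃` strictly between `i₁` and `i₂`.
-/

theorem exists_int_div_le_div_of_pos {a b : ℝ} (ha : 0 < a) (hb : 0 < b) {d : ℤ} (hd : 0 < d) :
    ∃ k : ℤ, 0 < k ∧ k ≤ d ∧
      (d : ℝ) / (a + b) ≤ (d + 1 - k) / a ∧ (d : ℝ) / (a + b) ≤ k / b := by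
  have hab : 0 < a + b := by positivity
  have hd' : (0 : ℝ) < d := by exact_mod_cast hd
  set x : ℝ := d * b / (a + b) with hx
  have hx_pos : 0 < x := by positivity
  have hx_le : x ≤ d := by
    rw [hx, div_le_iff₀ hab]
    nlinarith
  have hshare_b : (d : ℝ) / (a + b) = x / b := by
    rw [hx]; field_simp
  have hshare_a : (d : ℝ) / (a + b) = (d - x) / a := by
    rw [hx]; field_simp; ring
  refine ⟨⌈x⌉, Int.ceil_pos.mpr hx_pos, Int.ceil_le.mpr hx_le, ?_, ?_⟩
  · rw [hshare_a]
    exact div_le_div_of_nonneg_right (by linarith [Int.ceil_lt_add_one x]) ha.le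
  · rw [hshare_b]
    gcongr
    exact Int.le_ceil x

/-- Intermediate claim in the proof of Lemma 3: for integers `1 ≤ i₁`,
`i₁ + 2 ≤ i₂ ≤ n - 1`, there is an integer `i₃` with `i₁ < i₃ < i₂` such that
both `(i₂ - i₃)/(n - i₂)` and `(i₃ - i₁)/i₁` are at least
`(i₂ - i₁ - 1)/(n - (i₂ - i₁))`. -/
theorem stmt16 (n i₁ i₂ : ℤ) (h1 : 1 ≤ i₁) (h2 : i₁ + 2 ≤ i₂) (h3 : i₂ ≤ n - 1) :
    ∃ i₃ : ℤ, i₁ < i₃ ∧ i₃ < i₂ ∧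
      ((i₂ : ℝ) - (i₃ : ℝ)) / ((n : ℝ) - (i₂ : ℝ))
        ≥ ((i₂ : ℝ) - (i₁ : ℝ) - 1) / ((n : ℝ) - ((i₂ : ℝ) - (i₁ : ℝ))) ∧
      ((i₃ : ℝ) - (i₁ : ℝ)) / (i₁ : ℝ)
        ≥ ((i₂ : ℝ) - (i₁ : ℝ) - 1) / ((n : ℝ) - ((i₂ : ℝ) - (i₁ : ℝ))) := by
  have ha : (0 : ℝ) < n - i₂ := by
    rw [sub_pos]; exact_mod_cast (by omega : i₂ < n)
  have hb : (0 : ℝ) < i₁ := by exact_mod_cast (by omega : 0 < i₁)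
  obtain ⟨k, hk_pos, hk_le, hleft, hright⟩ :=
    exists_int_div_le_div_of_pos ha hb (d := i₂ - i₁ - 1) (by omega)
  refine ⟨i₁ + k, by omega, by omega, ?_, ?_⟩
  · convert hleft using 1 <;> push_cast <;> ring
  · convert hright using 1 <;> push_cast <;> ring
end
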